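/- Exact identification by the Open algorithm: let p be prime, let ĝ ∈ G₂ have order exactly p, and assume that for every a ∈ G₁ with a ≠ 1 the map c ↦ e(a, c) is injective and the map b ↦ e(b, ĝ) is injective on G₁. Let (αᵢ)ᵢ be a family of integers pairwise distinct modulo p (the registered users' secret exponents) with trapdoors τᵢ = ĝ^(αᵢ), let u ∈ G₁ satisfy u^r ≠ 1 for the chosen randomizer r, and let nk = (u^r, v^r, (u^(α_j))^r) be a nickname derived from user j's master public key. Then the tracing check e(u^r, τᵢ) = e((u^(α_j))^r, ĝ) holds if and only if i = j: the supervisor's trapdoor iteration identifies exactly the user who owns the nickname. -/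
import Mathlib


/-- Exact identification by the Open algorithm: with `ĝ` of order exactly the prime
`p`, pairwise-distinct-mod-`p` registered exponents `α i` with trapdoors `ĝ^(α i)`,
and a nickname `(u^r, v^r, (u^(α j))^r)` with `u^r ≠ 1`, the tracing check
`e (u^r) (ĝ^(α i)) = e ((u^(α j))^r) ĝ` holds iff `i = j`. -/
theorem ngs_open_exact_identification {G₁ G₂ GT : Type*} {ι : Type*}
    [CommGroup G₁] [CommGroup G₂] [CommGroup GT]
    (e : G₁ → G₂ → GT)
    (hbil_left : ∀ (a b : G₁) (c : G₂), e (a * b) c = e a c * e b c)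
    (hbil_right : ∀ (a : G₁) (c d : G₂), e a (c * d) = e a c * e a d)
    (p : ℕ) (hp : p.Prime) (ghat : G₂)
    (hgp : ghat ^ p = 1) (hord : ∀ k : ℤ, ghat ^ k = 1 → (p : ℤ) ∣ k)
    (hinjL : ∀ a : G₁, a ≠ 1 → Function.Injective (fun c : G₂ => e a c))
    (hinjR : Function.Injective (fun b : G₁ => e b ghat))
    (α : ι → ℤ)
    (hdist : ∀ i j : ι, i ≠ j → ¬ (α i ≡ α j [ZMOD (p : ℤ)]))
    (u : G₁) (r : ℤ) (hur : u ^ r ≠ 1) (j : ι) :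
    ∀ i : ι, e (u ^ r) (ghat ^ α i) = e ((u ^ α j) ^ r) ghat ↔ i = j := by
  -- left hom for fixed c
  have hL1 : ∀ c : G₂, e 1 c = 1 := by
    intro c
    have := hbil_left 1 1 c
    simp only [mul_one] at this
    exact (left_eq_mul.mp this)
  have hLpow : ∀ (a : G₁) (m : ℤ) (c : G₂), e (a ^ m) c = (e a c) ^ m := by
    intro a m c
    exact MonoidHom.map_zpow ⟨⟨fun b => e b c, hL1 c⟩, fun x y => hbil_left x y c⟩ a m
  have hR1 : ∀ a : G₁, e a 1 = 1 := by
    intro a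
    have := hbil_right a 1 1
    simp only [mul_one] at this
    exact (left_eq_mul.mp this)
  have hRpow : ∀ (a : G₁) (c : G₂) (m : ℤ), e a (c ^ m) = (e a c) ^ m := by
    intro a c m
    exact MonoidHom.map_zpow ⟨⟨fun d => e a d, hR1 a⟩, fun x y => hbil_right a x y⟩ c m
  intro i
  have key : e ((u ^ α j) ^ r) ghat = e (u ^ r) (ghat ^ α j) := by
    rw [hLpow, hLpow, hRpow, hLpow, ← zpow_mul, ← zpow_mul, mul_comm]
  constructor
  · intro h
    rw [key] at h
    by_contra hne
    have hgeq : ghat ^ α i = ghat ^ α j := hinjL (u ^ r) hur h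
    have : ghat ^ (α i - α j) = 1 := by
      rw [zpow_sub, hgeq, mul_inv_cancel]
    exact hdist i j hne ((Int.modEq_iff_dvd.mpr (hord _ this)).symm)
  · rintro rfl
    exact key.symm
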